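/- arXiv:2503.16925 — 2 statements merged into one kernel-verified Lean document; each statement's English description precedes it below -/
import Mathlib

section
/- For every integer s ≥ 0, every integer r with 1 ≤ r ≤ (n−s)/2, every integer x with 2 ≤ x ≤ n, and every q ∈ [0,1], one has q_{r,s}(x,q) ≤ 1 − 2q·r(n−s−r)/((n−s)(n−s−1)) + (s+1)s/n. -/
open MeasureTheory Filter

noncomputable section

namespace SuperpositionKConn

/-- `h(x,q) = 1 - (1-q)^((x-1)_+)` (with `0^0 = 1`); here `x - 1` is truncated
natural subtraction, which realizes `(x-1)_+`. -/
def hfun (x : ℕ) (q : ℝ) : ℝ := 1 - (1 - q) ^ (x - 1)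

/-- The falling factorial `(x)_2 = x(x-1)` as a real number. -/
def fall2 (x : ℕ) : ℝ := (x : ℝ) * ((x : ℝ) - 1)

/-- `κ* = E[X h(X,Q)]`, where `μ` is the joint law of `(X,Q)`. -/
def kappaStar (μ : Measure (ℕ × ℝ)) : ℝ := ∫ p, (p.1 : ℝ) * hfun p.1 p.2 ∂μ

/-- `κ_n = E[X̃ h(X̃,Q)]`, where `X̃ = min(X,n)`. -/
def kappaN (μ : Measure (ℕ × ℝ)) (n : ℕ) : ℝ :=
  ∫ p, (min p.1 n : ℝ) * hfun (min p.1 n) p.2 ∂μ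

/-- `τ* = E[(X)_2 Q (1-Q)^(X-2)]`. -/
def tauStar (μ : Measure (ℕ × ℝ)) : ℝ :=
  ∫ p, fall2 p.1 * p.2 * (1 - p.2) ^ (p.1 - 2) ∂μ

/-- `τ_n = E[(X̃)_2 Q (1-Q)^(X̃-2)]`, where `X̃ = min(X,n)`. -/
def tauN (μ : Measure (ℕ × ℝ)) (n : ℕ) : ℝ :=
  ∫ p, fall2 (min p.1 n) * p.2 * (1 - p.2) ^ (min p.1 n - 2) ∂μ

/-- `α = E[Q · 1_{X ≥ 2}]`. -/
def alphaPar (μ : Measure (ℕ × ℝ)) : ℝ := ∫ p in {p : ℕ × ℝ | 2 ≤ p.1}, p.2 ∂μ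

/-- `λ*_{n,m,k} = ln n + (k-1) ln(m/n) - (m/n) κ*`. -/
def lamStar (μ : Measure (ℕ × ℝ)) (n m k : ℕ) : ℝ :=
  Real.log n + ((k : ℝ) - 1) * Real.log ((m : ℝ) / n) - ((m : ℝ) / n) * kappaStar μ

/-- `λ_{n,m,k} = ln n + (k-1) ln(m/n) - (m/n) κ_n`. -/
def lamN (μ : Measure (ℕ × ℝ)) (n m k : ℕ) : ℝ :=
  Real.log n + ((k : ℝ) - 1) * Real.log ((m : ℝ) / n) - ((m : ℝ) / n) * kappaN μ n

/-- `m = Θ(n ln n)`:  `m n / (n ln n)` is eventually bounded between two positive constants. -/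
def IsThetaNLogN (m : ℕ → ℕ) : Prop :=
  ∃ c₁ c₂ : ℝ, 0 < c₁ ∧ 0 < c₂ ∧ ∀ᶠ n : ℕ in atTop,
    c₁ * ((n : ℝ) * Real.log n) ≤ (m n : ℝ) ∧ (m n : ℝ) ≤ c₂ * ((n : ℝ) * Real.log n)

instance (n : ℕ) : MeasurableSpace (Equiv.Perm (Fin n)) := ⊤

/-- The uniform distribution on `[0,1]`. -/
def unif01 : Measure ℝ := volume.restrict (Set.Icc 0 1)

instance : IsProbabilityMeasure unif01 := ⟨by simp [unif01, Real.volume_Icc]⟩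

/-- The uniform distribution on permutations of `Fin n`. -/
def permMeasure (n : ℕ) : Measure (Equiv.Perm (Fin n)) :=
  (@PMF.uniformOfFintype (Equiv.Perm (Fin n)) _ ⟨1⟩).toMeasure

instance (n : ℕ) : IsProbabilityMeasure (permMeasure n) := by
  unfold permMeasure; infer_instance

/-- Sample space describing one community graph on the vertex set `Fin n`:
a sampled pair `(X,Q)`, a uniform random permutation used to pick the vertex set
(the community's vertex set is the image under the permutation of the first
`min X n` indices, hence a uniformly distributed subset of size `min X n`),
and i.i.d. uniform `[0,1]` labels on potential edges (an edge is present iff its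
label is `≤ Q`). -/
abbrev CommSpace (n : ℕ) : Type :=
  (ℕ × ℝ) × Equiv.Perm (Fin n) × (Sym2 (Fin n) → ℝ)

/-- The law of one community. -/
def commMeasure (μ : Measure (ℕ × ℝ)) (n : ℕ) : Measure (CommSpace n) :=
  μ.prod ((permMeasure n).prod (Measure.pi fun _ : Sym2 (Fin n) => unif01))

instance (μ : Measure (ℕ × ℝ)) [IsProbabilityMeasure μ] (n : ℕ) :
    IsProbabilityMeasure (commMeasure μ n) := by
  unfold commMeasure; infer_instance

/-- Vertex `v` belongs to the community's vertex set. -/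
def inComm {n : ℕ} (ω : CommSpace n) (v : Fin n) : Prop :=
  ((ω.2.1.symm v : Fin n) : ℕ) < min ω.1.1 n

/-- `u` and `v` are adjacent in the community graph. -/
def commAdj {n : ℕ} (ω : CommSpace n) (u v : Fin n) : Prop :=
  u ≠ v ∧ inComm ω u ∧ inComm ω v ∧ ω.2.2 s(u, v) ≤ ω.1.2

/-- The degree of `v` in the community graph (`0` if `v` is outside the community). -/
def commDeg {n : ℕ} (ω : CommSpace n) (v : Fin n) : ℕ :=
  Set.ncard {u | commAdj ω v u}

/-- Sample space for `m` independent communities on `Fin n`. -/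
abbrev Sample (n m : ℕ) : Type := Fin m → CommSpace n

/-- The joint law of the `m` i.i.d. communities. -/
def sampleMeasure (μ : Measure (ℕ × ℝ)) (n m : ℕ) : Measure (Sample n m) :=
  Measure.pi fun _ : Fin m => commMeasure μ n

instance (μ : Measure (ℕ × ℝ)) [IsProbabilityMeasure μ] (n m : ℕ) :
    IsProbabilityMeasure (sampleMeasure μ n m) := by
  unfold sampleMeasure; infer_instance

/-- The union graph `G_{[n,m]}`. -/
def unionGraph {n m : ℕ} (ω : Sample n m) : SimpleGraph (Fin n) where
  Adj u v := ∃ i, commAdj (ω i) u v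
  symm := by
    constructor
    intro u v h
    simp only [commAdj] at h ⊢
    obtain ⟨i, hne, hu, hv, he⟩ := h
    exact ⟨i, hne.symm, hv, hu, by rwa [Sym2.eq_swap] at he⟩
  loopless := by
    constructor
    intro v h
    simp only [commAdj] at h
    obtain ⟨i, hne, -⟩ := h
    exact hne rfl

/-- The degree of `v` in the union graph `G_{[n,m]}`. -/
def deg {n m : ℕ} (ω : Sample n m) (v : Fin n) : ℕ :=
  Set.ncard {u | (unionGraph ω).Adj v u}

/-- `N_t`: the number of vertices of degree `t` in `G_{[n,m]}`. -/
def Ndeg {n m : ℕ} (ω : Sample n m) (t : ℕ) : ℕ :=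
  Set.ncard {v | deg ω v = t}

/-- `S(v) = Σ_{i=1}^m d_i(v)`. -/
def Sdeg {n m : ℕ} (ω : Sample n m) (v : Fin n) : ℕ :=
  ∑ i, commDeg (ω i) v

/-- The event `D(v) = {S(v) = k-1 and d_i(v) ∈ {0,1} for all i}`. -/
def Devent {n m : ℕ} (k : ℕ) (ω : Sample n m) (v : Fin n) : Prop :=
  Sdeg ω v = k - 1 ∧ ∀ i, commDeg (ω i) v ≤ 1

/-- `N'_{k-1}`: the number of vertices with property `D`. -/
def Nprime {n m : ℕ} (k : ℕ) (ω : Sample n m) : ℕ :=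
  Set.ncard {v | Devent k ω v}

/-- A graph is vertex `k`-connected if the removal of any `k-1` vertices does not
disconnect it. -/
def VertexKConnected {V : Type*} [Fintype V] [DecidableEq V] (G : SimpleGraph V) (k : ℕ) : Prop :=
  ∀ S : Finset V, S.card ≤ k - 1 → (G.induce (↑(Sᶜ) : Set V)).Connected

/-- A graph is edge `k`-connected if the removal of any `k-1` edges does not
disconnect it. -/
def EdgeKConnected {V : Type*} (G : SimpleGraph V) (k : ℕ) : Prop :=
  ∀ E : Finset (Sym2 V), E.card ≤ k - 1 → (G.deleteEdges ↑E).Connected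

end SuperpositionKConn
namespace SuperpositionKConn

/-- Sample space for the Bernoulli graph `G_x` on a uniformly random subset `A_x`
of `{1,…,n}` of size `x`:  a uniform random permutation (whose image of the first
`x` indices is `A_x`) together with i.i.d. uniform `[0,1]` edge labels (an edge is
present iff its label is `≤ q`). -/
abbrev BernSpace (n : ℕ) : Type := Equiv.Perm (Fin n) × (Sym2 (Fin n) → ℝ)

/-- The law of the Bernoulli graph data. -/
def bernMeasure (n : ℕ) : Measure (BernSpace n) :=
  (permMeasure n).prod (Measure.pi fun _ : Sym2 (Fin n) => unif01)

instance (n : ℕ) : IsProbabilityMeasure (bernMeasure n) := by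
  unfold bernMeasure; infer_instance

/-- Adjacency of `u` and `v` in the Bernoulli random graph `G_x` with edge
probability `q`. -/
def bAdj (x : ℕ) (q : ℝ) {n : ℕ} (ω : BernSpace n) (u v : Fin n) : Prop :=
  u ≠ v ∧ ((ω.1.symm u : Fin n) : ℕ) < x ∧ ((ω.1.symm v : Fin n) : ℕ) < x ∧ ω.2 s(u, v) ≤ q

/-- `q_{r,s}(x,q)`: the probability that no edge of `G_x` joins a vertex of
`{s+1,…,s+r}` to a vertex of `{s+r+1,…,n}` (vertices of `Fin n` being labelled
`1,…,n`, so those ranges are `Set.Ico s (s+r)` and `Set.Ico (s+r) n` in `Fin n`). -/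
def qrs (n r s x : ℕ) (q : ℝ) : ℝ :=
  (bernMeasure n {ω : BernSpace n | ∀ u v : Fin n, (u : ℕ) ∈ Set.Ico s (s + r) →
      (v : ℕ) ∈ Set.Ico (s + r) n → ¬ bAdj x q ω u v}).toReal

/-- `q̂_{r,s} = E[q_{r,s}(min(X,n), Q)]`. -/
def qhat (μ : Measure (ℕ × ℝ)) (n r s : ℕ) : ℝ :=
  ∫ p, qrs n r s (min p.1 n) p.2 ∂μ

end SuperpositionKConn


namespace SuperpositionKConn

private lemma unif01_Iic' {q : ℝ} (hq1 : q ≤ 1) : unif01 (Set.Iic q) = ENNReal.ofReal q := by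
  rw [unif01, Measure.restrict_apply measurableSet_Iic]
  have h : Set.Iic q ∩ Set.Icc 0 1 = Set.Icc 0 q := by
    ext t; simp only [Set.mem_inter_iff, Set.mem_Iic, Set.mem_Icc]; constructor
    · rintro ⟨h, h2, _⟩; exact ⟨h2, h⟩
    · rintro ⟨h2, h⟩; exact ⟨h, h2, le_trans h hq1⟩
  rw [h, Real.volume_Icc, sub_zero]

private lemma pi_label' {n : ℕ} (e : Sym2 (Fin n)) {q : ℝ} (hq1 : q ≤ 1) :
    (Measure.pi fun _ : Sym2 (Fin n) => unif01) {f : Sym2 (Fin n) → ℝ | f e ≤ q}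
      = ENNReal.ofReal q := by
  have hset : {f : Sym2 (Fin n) → ℝ | f e ≤ q}
      = Set.univ.pi (fun j => if j = e then Set.Iic q else Set.univ) := by
    ext f
    simp only [Set.mem_setOf_eq, Set.mem_pi, Set.mem_univ, forall_true_left]
    constructor
    · intro h j; split
      · next hj => subst hj; exact h
      · exact Set.mem_univ _
    · intro h; have := h e; simpa using this
  rw [hset, Measure.pi_pi]
  have h1 : ∀ j : Sym2 (Fin n), unif01 (if j = e then Set.Iic q else Set.univ)
      = if j = e then ENNReal.ofReal q else 1 := by
    intro j; split
    · exact unif01_Iic' hq1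
    · simp
  rw [Finset.prod_congr rfl (fun j _ => h1 j), Finset.prod_ite_eq' Finset.univ e]
  simp

private lemma permMeasure_singleton {n : ℕ} (σ : Equiv.Perm (Fin n)) :
    permMeasure n {σ} = (Fintype.card (Equiv.Perm (Fin n)) : ENNReal)⁻¹ := by
  rw [permMeasure, PMF.toMeasure_apply_singleton _ _ MeasurableSpace.measurableSet_top,
    PMF.uniformOfFintype_apply]

private lemma exists_perm_two {α : Type*} [DecidableEq α] {a b a' b' : α}
    (hab : a ≠ b) (hab' : a' ≠ b') : ∃ π : Equiv.Perm α, π a = a' ∧ π b = b' := by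
  refine ⟨Equiv.swap (Equiv.swap a a' b) b' * Equiv.swap a a', ?_, ?_⟩
  · have h1 : Equiv.swap a a' a ≠ Equiv.swap a a' b := (Equiv.swap a a').injective.ne hab
    rw [Equiv.swap_apply_left] at h1
    simp only [Equiv.Perm.mul_apply, Equiv.swap_apply_left]
    exact Equiv.swap_apply_of_ne_of_ne h1 hab'
  · simp only [Equiv.Perm.mul_apply, Equiv.swap_apply_left]

private lemma fiber_card_eq {n : ℕ} {i0 i1 : Fin n}
    {a b a' b' : Fin n} (hab : a ≠ b) (hab' : a' ≠ b') :
    (Finset.univ.filter fun σ : Equiv.Perm (Fin n) => σ i0 = a ∧ σ i1 = b).card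
      = (Finset.univ.filter fun σ : Equiv.Perm (Fin n) => σ i0 = a' ∧ σ i1 = b').card := by
  obtain ⟨π, hπa, hπb⟩ := exists_perm_two hab hab'
  refine Finset.card_bij' (fun σ _ => π * σ) (fun σ _ => π⁻¹ * σ) ?_ ?_ ?_ ?_
  · intro σ hσ
    rw [Finset.mem_filter] at hσ ⊢
    refine ⟨Finset.mem_univ _, ?_, ?_⟩
    · rw [Equiv.Perm.mul_apply, hσ.2.1, hπa]
    · rw [Equiv.Perm.mul_apply, hσ.2.2, hπb]
  · intro σ hσ
    rw [Finset.mem_filter] at hσ ⊢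
    refine ⟨Finset.mem_univ _, ?_, ?_⟩
    · rw [Equiv.Perm.mul_apply, hσ.2.1, ← hπa, Equiv.Perm.inv_def, Equiv.symm_apply_apply]
    · rw [Equiv.Perm.mul_apply, hσ.2.2, ← hπb, Equiv.Perm.inv_def, Equiv.symm_apply_apply]
  · intro σ _; simp [← mul_assoc]
  · intro σ _; simp [← mul_assoc]

private lemma count_pattern {n : ℕ} {i0 i1 : Fin n} (h01 : i0 ≠ i1) (PS : Finset (Fin n × Fin n))
    (hPSne : ∀ p ∈ PS, p.1 ≠ p.2) :
    (Finset.univ.filter fun σ : Equiv.Perm (Fin n) => (σ i0, σ i1) ∈ PS).card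
      = PS.card * (Finset.univ.filter fun σ : Equiv.Perm (Fin n) => σ i0 = i0 ∧ σ i1 = i1).card := by
  set c := (Finset.univ.filter fun σ : Equiv.Perm (Fin n) => σ i0 = i0 ∧ σ i1 = i1).card with hc
  have H : ∀ σ ∈ (Finset.univ.filter fun σ : Equiv.Perm (Fin n) => (σ i0, σ i1) ∈ PS),
      (σ i0, σ i1) ∈ PS := fun σ hσ => (Finset.mem_filter.mp hσ).2
  rw [Finset.card_eq_sum_card_fiberwise H]
  have hterm : ∀ p ∈ PS,
      ((Finset.univ.filter fun σ : Equiv.Perm (Fin n) => (σ i0, σ i1) ∈ PS).filter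
        (fun σ => (σ i0, σ i1) = p)).card = c := by
    intro p hp
    rw [hc, ← fiber_card_eq (hPSne p hp) h01]
    congr 1
    ext σ
    simp only [Finset.mem_filter, Finset.mem_univ, true_and, Prod.ext_iff]
    constructor
    · rintro ⟨-, h1, h2⟩; exact ⟨h1, h2⟩
    · rintro ⟨h1, h2⟩
      exact ⟨by simpa [h1, h2] using hp, h1, h2⟩
  rw [Finset.sum_congr rfl hterm, Finset.sum_const, smul_eq_mul]

private lemma card_perm_eq {n : ℕ} {i0 i1 : Fin n} (h01 : i0 ≠ i1) :
    Fintype.card (Equiv.Perm (Fin n))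
      = n * (n - 1) *
        (Finset.univ.filter fun σ : Equiv.Perm (Fin n) => σ i0 = i0 ∧ σ i1 = i1).card := by
  have H : ∀ σ : Equiv.Perm (Fin n), σ ∈ (Finset.univ : Finset (Equiv.Perm (Fin n))) →
      (σ i0, σ i1) ∈ (Finset.univ : Finset (Fin n)).offDiag := by
    intro σ _
    rw [Finset.mem_offDiag]
    exact ⟨Finset.mem_univ _, Finset.mem_univ _, fun h => h01 (σ.injective h)⟩
  have h1 := Finset.card_eq_sum_card_fiberwise H
  rw [Finset.card_univ] at h1
  have hterm : ∀ p ∈ (Finset.univ : Finset (Fin n)).offDiag,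
      ((Finset.univ : Finset (Equiv.Perm (Fin n))).filter (fun σ => (σ i0, σ i1) = p)).card
        = (Finset.univ.filter fun σ : Equiv.Perm (Fin n) => σ i0 = i0 ∧ σ i1 = i1).card := by
    intro p hp
    rw [Finset.mem_offDiag] at hp
    rw [← fiber_card_eq (a := p.1) (b := p.2) hp.2.2 h01]
    congr 1
    ext σ
    simp [Prod.ext_iff]
  rw [h1, Finset.sum_congr rfl hterm, Finset.sum_const, smul_eq_mul, Finset.offDiag_card,
    Finset.card_univ, Fintype.card_fin, Nat.mul_sub, Nat.mul_one]

end SuperpositionKConn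

namespace SuperpositionKConn

private lemma final_ineq (n s r : ℕ) (q : ℝ)
    (hr : 1 ≤ r) (hrn : 2 * r + s ≤ n) (hq0 : 0 ≤ q) (hq1 : q ≤ 1) :
    1 - 2 * q * ((r : ℝ) * ((n : ℝ) - s - r)) / ((n : ℝ) * ((n : ℝ) - 1)) ≤
      1 - 2 * q * ((r : ℝ) * ((n : ℝ) - s - r)) / (((n : ℝ) - s) * ((n : ℝ) - s - 1))
        + ((s : ℝ) + 1) * s / n := by
  have ha : (2 : ℝ) * r + s ≤ (n : ℝ) := by exact_mod_cast hrn
  have hr1 : (1 : ℝ) ≤ (r : ℝ) := by exact_mod_cast hr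
  have hs0 : (0 : ℝ) ≤ (s : ℝ) := Nat.cast_nonneg s
  rcases Nat.eq_zero_or_pos s with hs | hs
  · have hsR : (s : ℝ) = 0 := by rw [hs]; norm_cast
    rw [hsR]
    norm_num
  · have hs1 : (1 : ℝ) ≤ (s : ℝ) := by exact_mod_cast hs
    set a : ℝ := (n : ℝ) with hadef
    set b : ℝ := (s : ℝ) with hbdef
    set cr : ℝ := (r : ℝ) with hcrdef
    have hab2 : b + 2 ≤ a := by linarith
    have ha0 : (0 : ℝ) < a := by linarith
    have hD : (0 : ℝ) < (a - b) * (a - b - 1) := by nlinarith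
    have hN : (0 : ℝ) < a * (a - 1) := by nlinarith
    have ht0 : (0 : ℝ) ≤ cr * (a - b - cr) := by nlinarith
    have key : 2 * q * (cr * (a - b - cr)) / ((a - b) * (a - b - 1))
        - 2 * q * (cr * (a - b - cr)) / (a * (a - 1)) ≤ (b + 1) * b / a := by
      rw [div_sub_div _ _ (ne_of_gt hD) (ne_of_gt hN), div_le_div_iff₀ (by positivity) ha0]
      have h4 : 4 * (cr * (a - b - cr)) ≤ (a - b) ^ 2 := by nlinarith [sq_nonneg (a - b - 2 * cr)]
      have hq2 : 2 * q * (cr * (a - b - cr)) ≤ (a - b) ^ 2 / 2 := by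
        nlinarith [mul_nonneg (sub_nonneg.mpr hq1) ht0]
      have e1 : a - b ≤ 2 * (a - b - 1) := by linarith
      have e2 : 2 * a - b - 1 ≤ 2 * (a - 1) := by linarith
      have e3 : (a - b) * (2 * a - b - 1) ≤ (2 * (a - b - 1)) * (2 * (a - 1)) :=
        mul_le_mul e1 e2 (by linarith) (by linarith)
      have e4 : (2 * (a - b - 1)) * (2 * (a - 1)) ≤ 2 * (b + 1) * ((a - b - 1) * (a - 1)) := by
        nlinarith [mul_nonneg (mul_nonneg (show (0:ℝ) ≤ b - 1 by linarith)
          (show (0:ℝ) ≤ a - b - 1 by linarith)) (show (0:ℝ) ≤ a - 1 by linarith)]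
      have hfac : (a - b) * (2 * a - b - 1) ≤ 2 * (b + 1) * ((a - b - 1) * (a - 1)) :=
        le_trans e3 e4
      have hXb : (0 : ℝ) ≤ b * (2 * a - b - 1) * a := by
        apply mul_nonneg (mul_nonneg hs0 (by linarith)) ha0.le
      have hYb : (0 : ℝ) ≤ (a - b) * b * a / 2 := by
        apply div_nonneg (mul_nonneg (mul_nonneg (by linarith) hs0) ha0.le) (by norm_num)
      calc (2 * q * (cr * (a - b - cr)) * (a * (a - 1))
              - (a - b) * (a - b - 1) * (2 * q * (cr * (a - b - cr)))) * a
          = (2 * q * (cr * (a - b - cr))) * (b * (2 * a - b - 1) * a) := by ring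
        _ ≤ ((a - b) ^ 2 / 2) * (b * (2 * a - b - 1) * a) :=
            mul_le_mul_of_nonneg_right hq2 hXb
        _ = ((a - b) * (2 * a - b - 1)) * ((a - b) * b * a / 2) := by ring
        _ ≤ (2 * (b + 1) * ((a - b - 1) * (a - 1))) * ((a - b) * b * a / 2) :=
            mul_le_mul_of_nonneg_right hfac hYb
        _ = (b + 1) * b * ((a - b) * (a - b - 1) * (a * (a - 1))) := by ring
    linarith [key]



/-- Lemma 3, inequality (9). -/
theorem qrs_upper_bound_one
    (n s r x : ℕ) (q : ℝ)
    (hr : 1 ≤ r) (hrn : 2 * r + s ≤ n)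
    (hx2 : 2 ≤ x) (hxn : x ≤ n)
    (hq0 : 0 ≤ q) (hq1 : q ≤ 1) :
    qrs n r s x q ≤
      1 - 2 * q * ((r : ℝ) * ((n : ℝ) - s - r)) / (((n : ℝ) - s) * ((n : ℝ) - s - 1))
        + ((s : ℝ) + 1) * s / n := by
  classical
  have hn2 : 2 ≤ n := by omega
  have hsr : s + r ≤ n := by omega
  set i0 : Fin n := ⟨0, by omega⟩ with hi0
  set i1 : Fin n := ⟨1, by omega⟩ with hi1
  have hv0 : (i0 : ℕ) = 0 := rfl
  have hv1 : (i1 : ℕ) = 1 := rfl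
  have h01 : i0 ≠ i1 := by
    intro h
    have h' := congrArg Fin.val h
    rw [hv0, hv1] at h'
    omega
  set R : Finset (Fin n) := Finset.univ.filter (fun a : Fin n => s ≤ (a : ℕ) ∧ (a : ℕ) < s + r)
    with hR
  set T : Finset (Fin n) := Finset.univ.filter (fun a : Fin n => s + r ≤ (a : ℕ)) with hT
  set PS : Finset (Fin n × Fin n) := R ×ˢ T ∪ T ×ˢ R with hPSdef
  have hRcard : R.card = r := by
    rw [hR, Finset.card_filter,
      Fin.sum_univ_eq_sum_range (fun j => if s ≤ j ∧ j < s + r then 1 else 0) n,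
      ← Finset.card_filter]
    have he : (Finset.range n).filter (fun j => s ≤ j ∧ j < s + r) = Finset.Ico s (s + r) := by
      ext j; simp only [Finset.mem_filter, Finset.mem_range, Finset.mem_Ico]; omega
    rw [he, Nat.card_Ico]; omega
  have hTcard : T.card = n - (s + r) := by
    rw [hT, Finset.card_filter,
      Fin.sum_univ_eq_sum_range (fun j => if s + r ≤ j then 1 else 0) n,
      ← Finset.card_filter]
    have he : (Finset.range n).filter (fun j => s + r ≤ j) = Finset.Ico (s + r) n := by
      ext j; simp only [Finset.mem_filter, Finset.mem_range, Finset.mem_Ico]; omega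
    rw [he, Nat.card_Ico]
  have hPSne : ∀ p ∈ PS, p.1 ≠ p.2 := by
    intro p hp
    rw [hPSdef, Finset.mem_union, Finset.mem_product, Finset.mem_product, hR, hT] at hp
    simp only [Finset.mem_filter, Finset.mem_univ, true_and] at hp
    intro h
    have h' := congrArg Fin.val h
    rcases hp with ⟨⟨h1, h2⟩, h3⟩ | ⟨h3, h1, h2⟩ <;> omega
  have hRT : Disjoint R T := by
    rw [Finset.disjoint_left]
    intro a ha ha'
    rw [hR, Finset.mem_filter] at ha
    rw [hT, Finset.mem_filter] at ha'
    omega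
  have hPScard : PS.card = 2 * (r * (n - (s + r))) := by
    have hdisjRT : Disjoint (R ×ˢ T) (T ×ˢ R) := by
      rw [Finset.disjoint_left]
      rintro ⟨a, b⟩ hab hab'
      rw [Finset.mem_product] at hab hab'
      exact (Finset.disjoint_left.mp hRT) hab.1 hab'.1
    rw [hPSdef, Finset.card_union_of_disjoint hdisjRT, Finset.card_product, Finset.card_product,
      hRcard, hTcard]
    ring
  set c : ℕ := (Finset.univ.filter fun σ : Equiv.Perm (Fin n) => σ i0 = i0 ∧ σ i1 = i1).card
    with hcdef
  set F : Finset (Equiv.Perm (Fin n)) := Finset.univ.filter (fun σ => (σ i0, σ i1) ∈ PS)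
    with hFdef
  have hFcard : F.card = PS.card * c := count_pattern h01 PS hPSne
  have hcardPerm : Fintype.card (Equiv.Perm (Fin n)) = n * (n - 1) * c := card_perm_eq h01
  have hcpos : 0 < c := by
    have hpos := Fintype.card_pos (α := Equiv.Perm (Fin n))
    rcases Nat.eq_zero_or_pos c with h | h
    · rw [h, Nat.mul_zero] at hcardPerm; omega
    · exact h
  set L : Equiv.Perm (Fin n) → Set (Sym2 (Fin n) → ℝ) :=
    fun σ => {f | f s(σ i0, σ i1) ≤ q} with hL
  set Gset : Set (BernSpace n) := ⋃ σ ∈ F, (({σ} : Set (Equiv.Perm (Fin n))) ×ˢ L σ) with hGdef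
  have hLmeas : ∀ σ : Equiv.Perm (Fin n), MeasurableSet (L σ) := by
    intro σ
    have h : L σ = (fun f : Sym2 (Fin n) → ℝ => f s(σ i0, σ i1)) ⁻¹' Set.Iic q := rfl
    rw [h]
    exact (measurable_pi_apply _) measurableSet_Iic
  have hmeas1 : ∀ σ ∈ F, MeasurableSet ((({σ} : Set (Equiv.Perm (Fin n))) ×ˢ L σ)) := by
    intro σ _
    exact MeasurableSet.prod MeasurableSpace.measurableSet_top (hLmeas σ)
  have hGmeas : MeasurableSet Gset := by
    rw [hGdef]; exact Finset.measurableSet_biUnion F hmeas1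
  have hdisj : (↑F : Set (Equiv.Perm (Fin n))).PairwiseDisjoint
      (fun σ => (({σ} : Set (Equiv.Perm (Fin n))) ×ˢ L σ)) := by
    intro σ _ τ _ hστ
    rw [Function.onFun, Set.disjoint_left]
    rintro ⟨ρ, f⟩ h1 h2
    rw [Set.mem_prod] at h1 h2
    simp only [Set.mem_singleton_iff] at h1 h2
    exact hστ (by rw [← h1.1, h2.1])
  have hμG : bernMeasure n Gset
      = (F.card : ENNReal) * ((Fintype.card (Equiv.Perm (Fin n)) : ENNReal)⁻¹
          * ENNReal.ofReal q) := by
    rw [hGdef, measure_biUnion_finset hdisj hmeas1]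
    have hterm : ∀ σ ∈ F, bernMeasure n (({σ} : Set (Equiv.Perm (Fin n))) ×ˢ L σ)
        = (Fintype.card (Equiv.Perm (Fin n)) : ENNReal)⁻¹ * ENNReal.ofReal q := by
      intro σ _
      rw [bernMeasure, Measure.prod_prod, permMeasure_singleton, hL, pi_label' _ hq1]
    rw [Finset.sum_congr rfl hterm, Finset.sum_const, nsmul_eq_mul]
  have hsub : {ω : BernSpace n | ∀ u v : Fin n, (u : ℕ) ∈ Set.Ico s (s + r) →
      (v : ℕ) ∈ Set.Ico (s + r) n → ¬ bAdj x q ω u v} ⊆ Gsetᶜ := by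
    intro ω hω hmem
    rw [hGdef, Set.mem_iUnion₂] at hmem
    obtain ⟨σ, hσF, hmemp⟩ := hmem
    rw [Set.mem_prod, Set.mem_singleton_iff] at hmemp
    obtain ⟨hω1, hω2⟩ := hmemp
    rw [hFdef, Finset.mem_filter] at hσF
    have hPSm := hσF.2
    rw [hPSdef, Finset.mem_union, Finset.mem_product, Finset.mem_product] at hPSm
    have hi0sym : ω.1.symm (σ i0) = i0 := by rw [hω1]; exact σ.symm_apply_apply i0
    have hi1sym : ω.1.symm (σ i1) = i1 := by rw [hω1]; exact σ.symm_apply_apply i1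
    have hlabel : ω.2 s(σ i0, σ i1) ≤ q := hω2
    have hne : σ i0 ≠ σ i1 := fun h => h01 (σ.injective h)
    rcases hPSm with ⟨hmR, hmT⟩ | ⟨hmT, hmR⟩
    · rw [hR, Finset.mem_filter] at hmR
      rw [hT, Finset.mem_filter] at hmT
      exact hω (σ i0) (σ i1) (Set.mem_Ico.mpr ⟨hmR.2.1, hmR.2.2⟩)
        (Set.mem_Ico.mpr ⟨hmT.2, (σ i1).isLt⟩)
        ⟨hne, by rw [hi0sym, hv0]; omega, by rw [hi1sym, hv1]; omega, hlabel⟩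
    · rw [hR, Finset.mem_filter] at hmR
      rw [hT, Finset.mem_filter] at hmT
      refine hω (σ i1) (σ i0) (Set.mem_Ico.mpr ⟨hmR.2.1, hmR.2.2⟩)
        (Set.mem_Ico.mpr ⟨hmT.2, (σ i0).isLt⟩)
        ⟨hne.symm, by rw [hi1sym, hv1]; omega, by rw [hi0sym, hv0]; omega, ?_⟩
      rw [Sym2.eq_swap]; exact hlabel
  have hq' : qrs n r s x q ≤ (bernMeasure n Gsetᶜ).toReal :=
    ENNReal.toReal_mono (measure_ne_top _ _) (measure_mono hsub)
  have hcompl : (bernMeasure n Gsetᶜ).toReal = 1 - (bernMeasure n Gset).toReal := by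
    rw [prob_compl_eq_one_sub hGmeas, ENNReal.toReal_sub_of_le prob_le_one ENNReal.one_ne_top,
      ENNReal.toReal_one]
  have hF' : (F.card : ℝ) = 2 * (r : ℝ) * ((n : ℝ) - s - r) * c := by
    rw [hFcard, hPScard]
    push_cast [Nat.cast_sub hsr]
    ring
  have hP' : ((Fintype.card (Equiv.Perm (Fin n)) : ℝ)) = (n : ℝ) * ((n : ℝ) - 1) * c := by
    rw [hcardPerm]
    push_cast [Nat.cast_sub (show 1 ≤ n by omega)]
    ring
  have hc0 : (c : ℝ) ≠ 0 := Nat.cast_ne_zero.mpr hcpos.ne'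
  have hn0 : (n : ℝ) ≠ 0 := Nat.cast_ne_zero.mpr (by omega)
  have hn1 : (n : ℝ) - 1 ≠ 0 := by
    have h2 : (2 : ℝ) ≤ (n : ℝ) := by exact_mod_cast hn2
    intro h; linarith
  have hGreal : (bernMeasure n Gset).toReal
      = 2 * q * ((r : ℝ) * ((n : ℝ) - s - r)) / ((n : ℝ) * ((n : ℝ) - 1)) := by
    rw [hμG, ENNReal.toReal_mul, ENNReal.toReal_mul, ENNReal.toReal_inv,
      ENNReal.toReal_ofReal hq0, ENNReal.toReal_natCast, ENNReal.toReal_natCast, hF', hP']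
    calc 2 * (r : ℝ) * ((n : ℝ) - s - r) * c * (((n : ℝ) * ((n : ℝ) - 1) * c)⁻¹ * q)
        = ((c : ℝ) * (c : ℝ)⁻¹)
            * (2 * q * ((r : ℝ) * ((n : ℝ) - s - r)) * ((n : ℝ) * ((n : ℝ) - 1))⁻¹) := by
          rw [mul_inv]; ring
      _ = 2 * q * ((r : ℝ) * ((n : ℝ) - s - r)) / ((n : ℝ) * ((n : ℝ) - 1)) := by
          rw [mul_inv_cancel₀ hc0, one_mul, div_eq_mul_inv]
  rw [hcompl, hGreal] at hq'
  exact le_trans hq' (final_ineq n s r q hr hrn hq0 hq1)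

end SuperpositionKConn
end
end

section
/- Assume that E[X min(1,XQ) ln(1+X)] < ∞ and that m = m(n) = Θ(n ln n). Then E[(X̃)_2 (1 − (1−Q)^{X̃−1})] = o(n²/m) as n → ∞; in particular this expectation is o(n/ln n). -/
open MeasureTheory Filter

noncomputable section

namespace SuperpositionKConn


private lemma aux_fall2_nonneg (x : ℕ) : 0 ≤ fall2 x := by
  unfold fall2
  rcases Nat.eq_zero_or_pos x with h | h
  · simp [h]
  · have : (1:ℝ) ≤ x := by exact_mod_cast h
    nlinarith

private lemma aux_chord_ineq {t N : ℝ} (ht : 0 ≤ t) (htN : t ≤ N) (hN : 0 < N) :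
    t * Real.log N ≤ N * Real.log (1 + t) := by
  have hlog1t : 0 ≤ Real.log (1 + t) := Real.log_nonneg (by linarith)
  rcases le_or_gt (Real.log N) 0 with hL | hL
  · nlinarith
  · have ha : (0:ℝ) ≤ 1 - t / N := by
      rw [sub_nonneg, div_le_one hN]; exact htN
    have hb : (0:ℝ) ≤ t / N := by positivity
    have hcc := strictConcaveOn_log_Ioi.concaveOn.2 (Set.mem_Ioi.2 one_pos)
      (Set.mem_Ioi.2 (by linarith : (0:ℝ) < 1 + N)) ha hb (by ring)
    have harg : (1 - t / N) • (1:ℝ) + (t / N) • (1 + N) = 1 + t := by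
      simp only [smul_eq_mul]; rw [show t / N * (1 + N) = t / N + t / N * N by ring, div_mul_cancel₀ t hN.ne']; ring
    rw [harg] at hcc
    simp only [smul_eq_mul, Real.log_one, mul_zero, zero_add] at hcc
    rw [div_mul_eq_mul_div, div_le_iff₀ hN] at hcc
    have hmono : Real.log N ≤ Real.log (1 + N) := Real.log_le_log hN (by linarith)
    nlinarith

private lemma aux_bound (n x : ℕ) {q : ℝ} (hq0 : 0 ≤ q) (hq1 : q ≤ 1) :
    Real.log n / n * (fall2 (min x n) * (1 - (1 - q) ^ (min x n - 1))) ≤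
    (x : ℝ) * min 1 ((x : ℝ) * q) * Real.log (1 + x) := by
  have hx0 : (0:ℝ) ≤ x := Nat.cast_nonneg x
  have hM0 : 0 ≤ min 1 ((x:ℝ) * q) := le_min zero_le_one (mul_nonneg hx0 hq0)
  have hLg0 : 0 ≤ Real.log (1 + (x:ℝ)) := Real.log_nonneg (by linarith)
  have hRHS : 0 ≤ (x:ℝ) * min 1 ((x:ℝ) * q) * Real.log (1 + x) :=
    mul_nonneg (mul_nonneg hx0 hM0) hLg0
  rcases Nat.eq_zero_or_pos n with hn | hn
  · simp [hn]; exact hRHS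
  · set t : ℕ := min x n with ht
    have h1q0 : (0:ℝ) ≤ 1 - q := by linarith
    have hpow0 : (0:ℝ) ≤ (1 - q) ^ (t - 1) := pow_nonneg h1q0 _
    have hpow1 : (1 - q) ^ (t - 1) ≤ 1 := pow_le_one₀ h1q0 (by linarith)
    have hh0 : 0 ≤ 1 - (1 - q) ^ (t - 1) := by linarith
    have hh1 : 1 - (1 - q) ^ (t - 1) ≤ 1 := by linarith
    have hcast : ((t - 1 : ℕ) : ℝ) ≤ (x : ℝ) := by
      exact_mod_cast le_trans (Nat.sub_le t 1) (min_le_left x n)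
    have hcast0 : (0:ℝ) ≤ ((t - 1 : ℕ) : ℝ) := Nat.cast_nonneg _
    have hbern : 1 - (1 - q) ^ (t - 1) ≤ (x:ℝ) * q := by
      have hb := one_add_mul_le_pow (show (-2:ℝ) ≤ -q by linarith) (t - 1)
      have hrw : (1:ℝ) + -q = 1 - q := by ring
      rw [hrw] at hb
      have h2 : ((t - 1 : ℕ) : ℝ) * q ≤ (x:ℝ) * q := mul_le_mul_of_nonneg_right hcast hq0
      nlinarith
    have hM : 1 - (1 - q) ^ (t - 1) ≤ min 1 ((x:ℝ) * q) := le_min hh1 hbern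
    have ht_le_x : ((t:ℕ):ℝ) ≤ x := by exact_mod_cast min_le_left x n
    have ht_le_n : ((t:ℕ):ℝ) ≤ n := by exact_mod_cast min_le_right x n
    have hF2 : fall2 t ≤ (t:ℝ) * x := by
      unfold fall2
      have h1 : ((t:ℕ):ℝ) - 1 ≤ (x:ℝ) := by linarith
      exact mul_le_mul_of_nonneg_left h1 (Nat.cast_nonneg t)
    have hF20 : 0 ≤ fall2 t := aux_fall2_nonneg t
    have hnpos : (0:ℝ) < n := by exact_mod_cast hn
    have hlogn : 0 ≤ Real.log n := Real.log_nonneg (by exact_mod_cast hn)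
    have hL0 : 0 ≤ Real.log n / n := div_nonneg hlogn (le_of_lt hnpos)
    have hchord : ((t:ℕ):ℝ) * Real.log n ≤ (n:ℝ) * Real.log (1 + (t:ℝ)) :=
      aux_chord_ineq (Nat.cast_nonneg t) ht_le_n hnpos
    have hlogmono : Real.log (1 + (t:ℝ)) ≤ Real.log (1 + (x:ℝ)) :=
      Real.log_le_log (by positivity) (by linarith)
    have hkey : Real.log n / n * (t:ℝ) ≤ Real.log (1 + (x:ℝ)) := by
      rw [div_mul_eq_mul_div, div_le_iff₀ hnpos]
      nlinarith
    calc Real.log n / n * (fall2 t * (1 - (1 - q) ^ (t - 1)))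
        ≤ Real.log n / n * (((t:ℝ) * x) * (1 - (1 - q) ^ (t - 1))) :=
          mul_le_mul_of_nonneg_left (mul_le_mul_of_nonneg_right hF2 hh0) hL0
      _ = (Real.log n / n * (t:ℝ)) * ((x:ℝ) * (1 - (1 - q) ^ (t - 1))) := by ring
      _ ≤ Real.log (1 + (x:ℝ)) * ((x:ℝ) * (1 - (1 - q) ^ (t - 1))) :=
          mul_le_mul_of_nonneg_right hkey (mul_nonneg hx0 hh0)
      _ ≤ Real.log (1 + (x:ℝ)) * ((x:ℝ) * min 1 ((x:ℝ) * q)) :=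
          mul_le_mul_of_nonneg_left (mul_le_mul_of_nonneg_left hM hx0) hLg0
      _ = (x:ℝ) * min 1 ((x:ℝ) * q) * Real.log (1 + (x:ℝ)) := by ring

/-- Fact used in Lemma 6:
`E[(X̃)_2 (1 - (1-Q)^{X̃-1})] = o(n²/m)`, in particular `= o(n / ln n)`. -/
theorem truncated_second_moment_small
    (μ : Measure (ℕ × ℝ)) [IsProbabilityMeasure μ]
    (hQ : ∀ᵐ p ∂μ, p.2 ∈ Set.Icc (0 : ℝ) 1)
    (hmu' : Integrable (fun p : ℕ × ℝ =>
      (p.1 : ℝ) * min 1 ((p.1 : ℝ) * p.2) * Real.log (1 + p.1)) μ)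
    (m : ℕ → ℕ) (hm : IsThetaNLogN m) :
    Tendsto (fun n =>
      (∫ p, fall2 (min p.1 n) * (1 - (1 - p.2) ^ (min p.1 n - 1)) ∂μ) /
        ((n : ℝ) ^ 2 / (m n : ℝ)))
      atTop (nhds 0) ∧
    Tendsto (fun n =>
      (∫ p, fall2 (min p.1 n) * (1 - (1 - p.2) ^ (min p.1 n - 1)) ∂μ) /
        ((n : ℝ) / Real.log n))
      atTop (nhds 0) := by
  set I : ℕ → ℝ := fun n => ∫ p, fall2 (min p.1 n) * (1 - (1 - p.2) ^ (min p.1 n - 1)) ∂μ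
    with hI_def
  -- nonnegativity of the integrand, a.e.
  have hpt_nonneg : ∀ n : ℕ, ∀ p : ℕ × ℝ, p.2 ∈ Set.Icc (0:ℝ) 1 →
      0 ≤ fall2 (min p.1 n) * (1 - (1 - p.2) ^ (min p.1 n - 1)) := by
    intro n p hp
    obtain ⟨h0, h1⟩ := hp
    have hpow : (1 - p.2) ^ (min p.1 n - 1) ≤ 1 := pow_le_one₀ (by linarith) (by linarith)
    exact mul_nonneg (aux_fall2_nonneg _) (by linarith)
  have hI_nonneg : ∀ n, 0 ≤ I n := by
    intro n
    apply integral_nonneg_of_ae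
    filter_upwards [hQ] with p hp
    exact hpt_nonneg n p hp
  -- dominated convergence
  have hDCT : Tendsto (fun n : ℕ => ∫ p,
      Real.log n / n * (fall2 (min p.1 n) * (1 - (1 - p.2) ^ (min p.1 n - 1))) ∂μ)
      atTop (nhds (∫ _p, (0:ℝ) ∂μ)) := by
    apply tendsto_integral_of_dominated_convergence
      (fun p : ℕ × ℝ => |(p.1 : ℝ) * min 1 ((p.1 : ℝ) * p.2) * Real.log (1 + p.1)|)
    · intro n
      apply Measurable.aestronglyMeasurable
      apply Measurable.const_mul
      apply Measurable.mul
      · exact (Measurable.of_discrete (f := fun x : ℕ => fall2 (min x n))).comp measurable_fst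
      · apply Measurable.const_sub
        exact (measurable_const.sub measurable_snd).pow
          ((Measurable.of_discrete (f := fun x : ℕ => min x n - 1)).comp measurable_fst)
    · exact hmu'.abs
    · intro n
      filter_upwards [hQ] with p hp
      rw [Real.norm_eq_abs, abs_of_nonneg (mul_nonneg (by positivity) (hpt_nonneg n p hp))]
      · exact le_trans (aux_bound n p.1 hp.1 hp.2) (le_abs_self _)
    · apply Filter.Eventually.of_forall
      intro p
      have hls : Tendsto (fun n : ℕ => Real.log n / (n:ℝ)) atTop (nhds 0) :=
        (Real.isLittleO_log_id_atTop.tendsto_div_nhds_zero).comp tendsto_natCast_atTop_atTop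
      have hbase := hls.mul_const (fall2 p.1 * (1 - (1 - p.2) ^ (p.1 - 1)))
      rw [zero_mul] at hbase
      apply Tendsto.congr' _ hbase
      filter_upwards [eventually_ge_atTop p.1] with n hn
      rw [min_eq_left hn]
  rw [integral_zero] at hDCT
  have hrw : (fun n : ℕ => ∫ p,
      Real.log n / n * (fall2 (min p.1 n) * (1 - (1 - p.2) ^ (min p.1 n - 1))) ∂μ)
      = fun n : ℕ => Real.log n / n * I n := by
    funext n
    exact MeasureTheory.integral_const_mul _ _
  rw [hrw] at hDCT
  constructor
  · -- first limit, via squeeze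
    obtain ⟨c₁, c₂, hc₁, hc₂, hev⟩ := hm
    apply squeeze_zero' (g := fun n : ℕ => c₂ * (Real.log n / n * I n))
    · apply Filter.Eventually.of_forall
      intro n
      exact div_nonneg (hI_nonneg n) (by positivity)
    · filter_upwards [hev, eventually_ge_atTop 1] with n hn hn1
      obtain ⟨_, hhigh⟩ := hn
      have hn0 : (0:ℝ) < n := by exact_mod_cast hn1
      calc I n / ((n:ℝ) ^ 2 / (m n : ℝ)) = I n * (m n : ℝ) / (n:ℝ) ^ 2 :=
            div_div_eq_mul_div _ _ _
        _ ≤ I n * (c₂ * ((n:ℝ) * Real.log n)) / (n:ℝ) ^ 2 := by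
            gcongr
            exact hI_nonneg n
        _ = c₂ * (Real.log n / n * I n) := by field_simp
    · have := hDCT.const_mul c₂
      rwa [mul_zero] at this
  · apply Tendsto.congr _ hDCT
    intro n
    rw [div_div_eq_mul_div]
    ring


end SuperpositionKConn
end
end
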